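/- For any w ∈ R^m, g ∈ R^m, ν ≥ 0 and δ ≥ 0, the unconstrained maximization max_w [−ν‖w − g‖₂ − δ‖w‖_∞] equals −min_{μ ≥ 0} [ν·√(Σᵢ S_μ(gᵢ)²) + δμ], where S_μ is the soft-threshold operator at level μ. -/

import Mathlib

open Real

noncomputable def norm2 {d : ℕ} (x : Fin d → ℝ) : ℝ := Real.sqrt (∑ i, (x i)^2)
noncomputable def normInf {d : ℕ} (x : Fin d → ℝ) : ℝ := ⨆ i, |x i|

/-- Soft thresholding at level `μ`. -/
noncomputable def softT (μ x : ℝ) : ℝ := Real.sign x * max (|x| - μ) 0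

/-!
Both sides compare `w` with the level `μ = ‖w‖_∞`. If `|wᵢ| ≤ μ` for all `i`, then
`|wᵢ - gᵢ| ≥ |gᵢ| - μ`, so `‖w - g‖₂ ≥ ‖S_μ(g)‖₂` and the objective at `w` is at most
`-(ν‖S_μ(g)‖₂ + δμ)`. Conversely, clipping `g` to `[-μ, μ]` gives a point with `‖w‖_∞ ≤ μ` and
`g - w = S_μ(g)`, which attains that bound.
-/

def clip (μ a : ℝ) : ℝ := max (-μ) (min μ a)

lemma abs_clip_le {μ : ℝ} (hμ : 0 ≤ μ) (a : ℝ) : |clip μ a| ≤ μ :=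
  abs_le.mpr ⟨le_max_left _ _, max_le (by linarith) (min_le_left _ _)⟩

lemma softT_eq_sub_clip {μ : ℝ} (hμ : 0 ≤ μ) (a : ℝ) : softT μ a = a - clip μ a := by
  rcases lt_trichotomy a 0 with ha | rfl | ha
  · rw [softT, sign_of_neg ha, abs_of_neg ha, clip]
    rcases le_total a (-μ) with h | h
    · rw [max_eq_left (by linarith), min_eq_right (by linarith), max_eq_left h]; ring
    · rw [max_eq_right (by linarith), min_eq_right (by linarith), max_eq_right h]; ring
  · simp [softT, clip, hμ]
  · rw [softT, sign_of_pos ha, abs_of_pos ha, clip]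
    rcases le_total a μ with h | h
    · rw [max_eq_right (by linarith), min_eq_right h, max_eq_right (by linarith)]; ring
    · rw [max_eq_left (by linarith), min_eq_left h, max_eq_right (by linarith)]; ring

lemma abs_softT {μ : ℝ} (hμ : 0 ≤ μ) (a : ℝ) : |softT μ a| = max (|a| - μ) 0 := by
  rcases lt_trichotomy a 0 with ha | rfl | ha
  · rw [softT, sign_of_neg ha, abs_mul, abs_neg, abs_one, one_mul, abs_of_nonneg (le_max_right _ _)]
  · simp [softT, hμ]
  · rw [softT, sign_of_pos ha, abs_mul, abs_one, one_mul, abs_of_nonneg (le_max_right _ _)]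

lemma abs_softT_le_abs_sub {μ a b : ℝ} (hb : |b| ≤ μ) : |softT μ a| ≤ |b - a| := by
  rw [abs_softT ((abs_nonneg b).trans hb), abs_sub_comm]
  exact max_le (by linarith [abs_sub_abs_le_abs_sub a b]) (abs_nonneg _)

lemma sSup_image_eq_neg_sInf_image {α β : Type*} {f : α → ℝ} {h : β → ℝ} {s : Set α} {t : Set β}
    (ht : t.Nonempty) (hbdd : BddBelow (h '' t)) (hupper : ∀ w ∈ s, ∃ μ ∈ t, f w ≤ -h μ)
    (hlower : ∀ μ ∈ t, ∃ w ∈ s, -h μ ≤ f w) : sSup (f '' s) = -sInf (h '' t) := by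
  obtain ⟨μ₀, hμ₀⟩ := ht
  obtain ⟨w₀, hw₀, -⟩ := hlower μ₀ hμ₀
  refine IsLUB.csSup_eq ⟨?_, fun b hb => ?_⟩ ⟨f w₀, w₀, hw₀, rfl⟩
  · rintro _ ⟨w, hw, rfl⟩
    obtain ⟨μ, hμ, hfw⟩ := hupper w hw
    linarith [csInf_le hbdd ⟨μ, hμ, rfl⟩]
  · suffices -b ≤ sInf (h '' t) by linarith
    refine le_csInf ⟨h μ₀, μ₀, hμ₀, rfl⟩ ?_
    rintro _ ⟨μ, hμ, rfl⟩
    obtain ⟨w, hw, hfw⟩ := hlower μ hμ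
    linarith [hb ⟨w, hw, rfl⟩]

section Norms

variable {d : ℕ}

lemma norm2_le_norm2 {x y : Fin d → ℝ} (h : ∀ i, |x i| ≤ |y i|) : norm2 x ≤ norm2 y :=
  sqrt_le_sqrt (Finset.sum_le_sum fun i _ => sq_le_sq.mpr (h i))

lemma norm2_congr_abs {x y : Fin d → ℝ} (h : ∀ i, |x i| = |y i|) : norm2 x = norm2 y :=
  le_antisymm (norm2_le_norm2 fun i => (h i).le) (norm2_le_norm2 fun i => (h i).ge)

lemma normInf_nonneg (w : Fin d → ℝ) : 0 ≤ normInf w :=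
  Real.iSup_nonneg fun _ => abs_nonneg _

lemma abs_le_normInf (w : Fin d → ℝ) (i : Fin d) : |w i| ≤ normInf w :=
  le_ciSup (f := fun j => |w j|) (Set.finite_range _).bddAbove i

lemma normInf_le {w : Fin d → ℝ} {μ : ℝ} (hμ : 0 ≤ μ) (h : ∀ i, |w i| ≤ μ) : normInf w ≤ μ :=
  Real.iSup_le h hμ

lemma norm2_softT_le_norm2_sub {μ : ℝ} {w : Fin d → ℝ} (hw : ∀ i, |w i| ≤ μ)
    (g : Fin d → ℝ) : norm2 (fun i => softT μ (g i)) ≤ norm2 (w - g) :=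
  norm2_le_norm2 fun i => abs_softT_le_abs_sub (hw i)

lemma norm2_clip_sub {μ : ℝ} (hμ : 0 ≤ μ) (g : Fin d → ℝ) :
    norm2 ((fun i => clip μ (g i)) - g) = norm2 (fun i => softT μ (g i)) :=
  norm2_congr_abs fun i => by rw [softT_eq_sub_clip hμ, Pi.sub_apply, abs_sub_comm]

end Norms

/-- `max_w [−ν‖w − g‖₂ − δ‖w‖_∞] = −min_{μ≥0} [ν√(Σᵢ S_μ(gᵢ)²) + δμ]`. -/
theorem stmt16 (m : ℕ) (ν δ : ℝ) (hν : 0 ≤ ν) (hδ : 0 ≤ δ) (g : Fin m → ℝ) :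
    sSup ((fun w : Fin m → ℝ => -ν * norm2 (w - g) - δ * normInf w) '' Set.univ)
      = - sInf ((fun μ => ν * Real.sqrt (∑ i, (softT μ (g i))^2) + δ * μ) ''
          {μ : ℝ | 0 ≤ μ}) := by
  change _ = -sInf ((fun μ => ν * norm2 (fun i => softT μ (g i)) + δ * μ) '' _)
  refine sSup_image_eq_neg_sInf_image ⟨0, le_refl (0 : ℝ)⟩ ⟨0, ?_⟩ (fun w _ => ?_) (fun μ hμ => ?_)
  · rintro _ ⟨μ, hμ, rfl⟩
    exact add_nonneg (mul_nonneg hν (sqrt_nonneg _)) (mul_nonneg hδ hμ)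
  · refine ⟨normInf w, normInf_nonneg w, ?_⟩
    have := norm2_softT_le_norm2_sub (abs_le_normInf w) g
    linarith [mul_le_mul_of_nonneg_left this hν]
  · refine ⟨fun i => clip μ (g i), trivial, ?_⟩
    have := normInf_le hμ fun i => abs_clip_le hμ (g i)
    rw [norm2_clip_sub hμ]
    linarith [mul_le_mul_of_nonneg_left this hδ]
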